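/- arXiv:2402.09436 — 3 statements merged into one kernel-verified Lean document; each statement's English description precedes it below -/
import Mathlib

section
/- For 0 < c < 1 and any non-negative integer n, the integral ∫₀^c [1/(1-t)^{n+1} + 1/(1+t)^{n+1}] (c² - t²)^{(n-1)/2} dt equals B((n+1)/2, 1/2) · c^n / (1-c²)^{(n+1)/2}. -/
/-!
The Möbius substitution `x = (t - c²) / (c (1 - t))` sends `-c, c, 1` to `-1, 1, ∞`; it maps
`(-c, c)` onto `(-1, 1)` and turns `(1 - t)^(-(n+1)) (c² - t²)^((n-1)/2) dt` into
`c^n (1 - c²)^(-(n+1)/2) (1 - x²)^((n-1)/2) dx`. The substitution `x = √u` turns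
`∫_{-1}^{1} (1 - x²)^((n-1)/2) dx` into `B((n+1)/2, 1/2)`. Finally the second summand of the
integrand is the first one evaluated at `-t`, so the integral over `(0, c)` is the integral of the
first summand over `(-c, c)`.

Integrability is never checked by hand: each integral involved is shown to equal a positive
number, so it cannot be the junk value `0` of a non-integrable function.
-/

open Real intervalIntegral

/-- Beta function via Gamma functions. -/
noncomputable def betaFn (x y : ℝ) : ℝ := Real.Gamma x * Real.Gamma y / Real.Gamma (x + y)

open MeasureTheory Set
open scoped Interval

lemma betaFn_pos {a b : ℝ} (ha : 0 < a) (hb : 0 < b) : 0 < betaFn a b :=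
  ProbabilityTheory.beta_pos ha hb

lemma integral_rpow_mul_one_sub_rpow {a b : ℝ} (ha : 0 < a) (hb : 0 < b) :
    ∫ u in (0:ℝ)..1, u ^ (a - 1) * (1 - u) ^ (b - 1) = betaFn a b := by
  have hcast : ((∫ u in (0:ℝ)..1, u ^ (a - 1) * (1 - u) ^ (b - 1) : ℝ) : ℂ)
      = Complex.betaIntegral a b := by
    rw [Complex.betaIntegral, ← integral_ofReal]
    refine integral_congr fun u hu => ?_
    rw [uIcc_of_le zero_le_one] at hu
    push_cast [Complex.ofReal_cpow hu.1, Complex.ofReal_cpow (sub_nonneg.2 hu.2)]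
    rfl
  rw [show betaFn a b = ProbabilityTheory.beta a b from rfl,
    ProbabilityTheory.beta_eq_betaIntegralReal a b ha hb, ← hcast, Complex.ofReal_re]

lemma integral_add_comp_neg {E : Type*} [NormedAddCommGroup E] [NormedSpace ℝ E] {f : ℝ → E}
    {c : ℝ} (h₁ : IntervalIntegrable f volume (-c) 0) (h₂ : IntervalIntegrable f volume 0 c) :
    ∫ x in (0:ℝ)..c, (f x + f (-x)) = ∫ x in -c..c, f x := by
  have h₃ : IntervalIntegrable (fun x => f (-x)) volume 0 c := by
    simpa using (h₁.comp_sub_left 0).symm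
  rw [integral_add h₂ h₃, integral_comp_neg, neg_zero, add_comm,
    integral_add_adjacent_intervals h₁ h₂]

lemma betaFn_comm (a b : ℝ) : betaFn a b = betaFn b a := by
  rw [betaFn, betaFn, add_comm, mul_comm]

lemma integral_one_sub_sq_rpow_zero_one {p : ℝ} (hp : -1 < p) :
    ∫ x in (0:ℝ)..1, (1 - x ^ 2) ^ p = betaFn (1 / 2) (p + 1) / 2 := by
  have hsqrt := integral_Icc_deriv_smul_of_deriv_nonneg (g := fun x : ℝ => (1 - x ^ 2) ^ p)
    continuous_sqrt.continuousOn (fun x hx => hasDerivAt_sqrt hx.1.ne')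
    (fun x hx => by positivity) zero_le_one
  rw [sqrt_zero, sqrt_one] at hsqrt
  have hpointwise : ∀ x ∈ Ioo (0:ℝ) 1, (1 / (2 * √x)) • (1 - √x ^ 2) ^ p
      = 1 / 2 * (x ^ (1 / 2 - 1 : ℝ) * (1 - x) ^ (p + 1 - 1)) := by
    intro x hx
    rw [sq_sqrt hx.1.le, smul_eq_mul, add_sub_cancel_right,
      show (1 / 2 - 1 : ℝ) = -(1 / 2) by norm_num, rpow_neg hx.1.le, ← sqrt_eq_rpow]
    ring
  calc ∫ x in (0:ℝ)..1, (1 - x ^ 2) ^ p = ∫ x in Icc (0:ℝ) 1, (1 - x ^ 2) ^ p := by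
        rw [integral_of_le zero_le_one, integral_Icc_eq_integral_Ioc]
    _ = ∫ x in Ioo (0:ℝ) 1, 1 / 2 * (x ^ (1 / 2 - 1 : ℝ) * (1 - x) ^ (p + 1 - 1)) := by
        rw [← hsqrt, integral_Icc_eq_integral_Ioo]
        exact setIntegral_congr_fun measurableSet_Ioo hpointwise
    _ = betaFn (1 / 2) (p + 1) / 2 := by
        rw [MeasureTheory.integral_const_mul, ← integral_Ioc_eq_integral_Ioo,
          ← integral_of_le zero_le_one,
          integral_rpow_mul_one_sub_rpow (by norm_num) (by linarith)]
        ring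

lemma integral_one_sub_sq_rpow {p : ℝ} (hp : -1 < p) :
    ∫ x in (-1:ℝ)..1, (1 - x ^ 2) ^ p = betaFn (p + 1) (1 / 2) := by
  have hhalf := integral_one_sub_sq_rpow_zero_one hp
  have hpos : 0 < betaFn (1 / 2) (p + 1) := betaFn_pos (by norm_num) (by linarith)
  have h₂ : IntervalIntegrable (fun x : ℝ => (1 - x ^ 2) ^ p) volume 0 1 :=
    intervalIntegrable_of_integral_ne_zero (by rw [hhalf]; positivity)
  have h₁ : IntervalIntegrable (fun x : ℝ => (1 - x ^ 2) ^ p) volume (-1) 0 := by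
    simpa using (h₂.comp_sub_left 0).symm
  rw [← integral_add_comp_neg h₁ h₂]
  simp only [neg_sq, ← two_mul]
  rw [intervalIntegral.integral_const_mul, hhalf, betaFn_comm]
  ring

noncomputable def mobiusMap (c t : ℝ) : ℝ := (t - c ^ 2) / (c * (1 - t))

section mobiusMap

variable {c t : ℝ}

lemma hasDerivAt_mobiusMap (hc : c ≠ 0) (ht : t ≠ 1) :
    HasDerivAt (mobiusMap c) ((1 - c ^ 2) / (c * (1 - t) ^ 2)) t := by
  have ht' : 1 - t ≠ 0 := sub_ne_zero.2 (Ne.symm ht)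
  have h : HasDerivAt (fun x => (x - c ^ 2) / (c * (1 - x))) _ t :=
    ((hasDerivAt_id' t).sub_const (c ^ 2)).div
      (((hasDerivAt_const t 1).sub (hasDerivAt_id' t)).const_mul c) (mul_ne_zero hc ht')
  refine h.congr_deriv ?_
  field_simp
  ring

lemma mobiusMap_neg_self (hc : c ≠ 0) (hc1 : c ≠ -1) : mobiusMap c (-c) = -1 := by
  rw [mobiusMap, div_eq_iff (mul_ne_zero hc (by contrapose! hc1; linarith))]
  ring

lemma mobiusMap_self (hc : c ≠ 0) (hc1 : c ≠ 1) : mobiusMap c c = 1 := by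
  rw [mobiusMap, div_eq_one_iff_eq (mul_ne_zero hc (sub_ne_zero.2 (Ne.symm hc1)))]
  ring

lemma one_sub_mobiusMap_sq (hc : c ≠ 0) (ht : t ≠ 1) :
    1 - mobiusMap c t ^ 2 = (1 - c ^ 2) * (c ^ 2 - t ^ 2) / (c * (1 - t)) ^ 2 := by
  have ht' : 1 - t ≠ 0 := sub_ne_zero.2 (Ne.symm ht)
  rw [mobiusMap]
  field_simp
  ring

lemma deriv_mul_one_sub_mobiusMap_sq_rpow (p : ℝ) (hc : 0 < c) (hc1 : c < 1)
    (ht : t ∈ Ioo (-c) c) :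
    (1 - c ^ 2) / (c * (1 - t) ^ 2) * (1 - mobiusMap c t ^ 2) ^ p
      = (1 - c ^ 2) ^ (p + 1) / c ^ (2 * p + 1) *
          (((1 - t) ^ (2 * p + 2))⁻¹ * (c ^ 2 - t ^ 2) ^ p) := by
  obtain ⟨ht₁, ht₂⟩ := ht
  have hA : 0 < 1 - c ^ 2 := by nlinarith
  have hB : 0 < c ^ 2 - t ^ 2 := by nlinarith
  have hT : 0 < 1 - t := by linarith
  have hD : ((c * (1 - t)) ^ 2) ^ p = c ^ (2 * p) * (1 - t) ^ (2 * p) := by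
    rw [← rpow_natCast, ← rpow_mul (by positivity), mul_rpow hc.le hT.le]
    norm_num
  rw [one_sub_mobiusMap_sq hc.ne' (by linarith : t < 1).ne,
    div_rpow (by positivity) (by positivity), mul_rpow hA.le hB.le, hD, rpow_add hA,
    rpow_add hc, rpow_add hT, rpow_one, rpow_one, rpow_two]
  field_simp

end mobiusMap

theorem integral_inv_one_sub_rpow_mul_sq_sub_sq_rpow {c p : ℝ} (hc : 0 < c) (hc1 : c < 1)
    (hp : -1 < p) :
    ∫ t in (-c)..c, ((1 - t) ^ (2 * p + 2))⁻¹ * (c ^ 2 - t ^ 2) ^ p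
      = betaFn (p + 1) (1 / 2) * c ^ (2 * p + 1) / (1 - c ^ 2) ^ (p + 1) := by
  have hA : 0 < 1 - c ^ 2 := by nlinarith
  have hderiv :
      ∀ t ∈ Icc (-c) c, HasDerivAt (mobiusMap c) ((1 - c ^ 2) / (c * (1 - t) ^ 2)) t :=
    fun t ht => hasDerivAt_mobiusMap hc.ne' (by linarith [ht.2] : t < 1).ne
  have hsub := integral_Icc_deriv_smul_of_deriv_nonneg (g := fun x : ℝ => (1 - x ^ 2) ^ p)
    (fun t ht => (hderiv t ht).continuousAt.continuousWithinAt)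
    (fun t ht => hderiv t (Ioo_subset_Icc_self ht)) (fun t _ => by positivity) (by linarith)
  rw [mobiusMap_neg_self hc.ne' (by linarith : -1 < c).ne', mobiusMap_self hc.ne' hc1.ne] at hsub
  have hK : (1 - c ^ 2) ^ (p + 1) / c ^ (2 * p + 1) *
      ∫ t in (-c)..c, ((1 - t) ^ (2 * p + 2))⁻¹ * (c ^ 2 - t ^ 2) ^ p
        = betaFn (p + 1) (1 / 2) := by
    rw [← integral_one_sub_sq_rpow hp, ← intervalIntegral.integral_const_mul,
      integral_of_le (by linarith), integral_of_le (by norm_num), ← integral_Icc_eq_integral_Ioc,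
      ← integral_Icc_eq_integral_Ioc, ← hsub, integral_Icc_eq_integral_Ioo,
      integral_Icc_eq_integral_Ioo]
    exact setIntegral_congr_fun measurableSet_Ioo fun t ht =>
      (deriv_mul_one_sub_mobiusMap_sq_rpow p hc hc1 ht).symm
  rw [← hK]
  field_simp

theorem stmt_0 (c : ℝ) (n : ℕ) (hc0 : 0 < c) (hc1 : c < 1) :
    ∫ t in (0:ℝ)..c,
      (1 / (1 - t) ^ (n + 1) + 1 / (1 + t) ^ (n + 1)) * (c ^ 2 - t ^ 2) ^ (((n : ℝ) - 1) / 2)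
      = betaFn (((n : ℝ) + 1) / 2) (1 / 2) * c ^ n / (1 - c ^ 2) ^ (((n : ℝ) + 1) / 2) := by
  set p : ℝ := ((n : ℝ) - 1) / 2 with hp_def
  have hp : -1 < p := by rw [hp_def]; linarith [n.cast_nonneg (α := ℝ)]
  have hp₁ : 2 * p + 1 = n := by ring
  have hp₂ : 2 * p + 2 = ((n + 1 : ℕ) : ℝ) := by push_cast; ring
  set F : ℝ → ℝ := fun t => ((1 - t) ^ (2 * p + 2))⁻¹ * (c ^ 2 - t ^ 2) ^ p
  have hF := integral_inv_one_sub_rpow_mul_sq_sub_sq_rpow hc0 hc1 hp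
  have hI : IntervalIntegrable F volume (-c) c := by
    refine intervalIntegrable_of_integral_ne_zero ?_
    have : 0 < 1 - c ^ 2 := by nlinarith
    have : 0 < betaFn (p + 1) (1 / 2) := betaFn_pos (by linarith) one_half_pos
    rw [hF]
    positivity
  have h0 : (0:ℝ) ∈ [[-c, c]] := by rw [uIcc_of_le (by linarith)]; constructor <;> linarith
  calc _ = ∫ t in (0:ℝ)..c, (F t + F (-t)) := by
        refine integral_congr fun t _ => ?_
        simp only [F, hp₂, rpow_natCast, neg_sq, sub_neg_eq_add]
        ring
    _ = ∫ t in (-c)..c, F t :=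
        integral_add_comp_neg (hI.mono_set (uIcc_subset_uIcc left_mem_uIcc h0))
          (hI.mono_set (uIcc_subset_uIcc h0 right_mem_uIcc))
    _ = _ := by
        rw [hF, hp₁, rpow_natCast, show p + 1 = ((n : ℝ) + 1) / 2 by ring]
end

section
/- Let ε be a positive, continuously differentiable slowly varying function, i.e., ε(y)/ε(x) = exp(∫ₓ^y u(t)/t dt) for some bounded function u with u(t) → 0 as t → ∞. If N = N(d) satisfies N/d² → ∞ as d → ∞, then ε(N)^d / ε(N-d)^d → 1. -/
open Filter Topology

theorem stmt_9 (ε u : ℝ → ℝ) (hpos : ∀ x > 0, 0 < ε x)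
    (hbdd : ∃ C, ∀ t, |u t| ≤ C) (hu0 : Tendsto u atTop (nhds 0))
    (hKaramata : ∀ x y : ℝ, 0 < x → x ≤ y → ε y / ε x = Real.exp (∫ t in x..y, u t / t))
    (N : ℕ → ℕ) (hN : ∀ d, d < N d)
    (hgrowth : Tendsto (fun d : ℕ => (N d : ℝ) / (d : ℝ) ^ 2) atTop atTop) :
    Tendsto (fun d : ℕ => ε (N d) ^ d / ε ((N d : ℝ) - d) ^ d) atTop (nhds 1) := by
  obtain ⟨C, hC⟩ := hbdd
  have hC0 : 0 ≤ C := le_trans (abs_nonneg _) (hC 0)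
  have ha : ∀ d : ℕ, (1:ℝ) ≤ (N d : ℝ) - d := by
    intro d
    have h := hN d
    have : (d:ℝ) + 1 ≤ N d := by exact_mod_cast h
    linarith
  have hapos : ∀ d : ℕ, (0:ℝ) < (N d : ℝ) - d := fun d => lt_of_lt_of_le one_pos (ha d)
  have hkey : ∀ d : ℕ, ε (N d) ^ d / ε ((N d : ℝ) - d) ^ d
      = Real.exp ((d : ℝ) * ∫ t in ((N d:ℝ) - d)..(N d : ℝ), u t / t) := by
    intro d
    have hle : (N d : ℝ) - d ≤ (N d : ℝ) := by
      have : (0:ℝ) ≤ d := Nat.cast_nonneg d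
      linarith
    have h1 := hKaramata _ _ (hapos d) hle
    rw [← div_pow, h1, ← Real.exp_nat_mul]
  have hbound : Tendsto (fun d : ℕ => (d:ℝ) * ∫ t in ((N d:ℝ)-d)..(N d:ℝ), u t / t)
      atTop (nhds 0) := by
    apply squeeze_zero_norm (a := fun d : ℕ => C * (d:ℝ)^2 / ((N d:ℝ) - d))
    · intro d
      set a := (N d : ℝ) - d with hadef
      have hap := hapos d
      have hint : ‖∫ t in a..(N d:ℝ), u t / t‖ ≤ (C / a) * |(N d:ℝ) - a| := by
        apply intervalIntegral.norm_integral_le_of_norm_le_const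
        intro t ht
        have hle : a ≤ (N d : ℝ) := by
          have : (0:ℝ) ≤ d := Nat.cast_nonneg d
          simp [hadef]
        rw [Set.uIoc_of_le hle] at ht
        have htpos : 0 < t := lt_of_lt_of_le hap (le_of_lt ht.1)
        rw [Real.norm_eq_abs, abs_div, abs_of_pos htpos]
        exact div_le_div₀ hC0 (hC t) hap (le_of_lt ht.1)
      have habs : |(N d:ℝ) - a| = (d:ℝ) := by
        simp [hadef, abs_of_nonneg (Nat.cast_nonneg d : (0:ℝ) ≤ d)]
      rw [habs] at hint
      have : ‖(d:ℝ) * ∫ t in a..(N d:ℝ), u t / t‖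
          = (d:ℝ) * ‖∫ t in a..(N d:ℝ), u t / t‖ := by
        rw [norm_mul, Real.norm_natCast]
      rw [this]
      have h2 : (d:ℝ) * ‖∫ t in a..(N d:ℝ), u t / t‖ ≤ (d:ℝ) * (C / a * d) :=
        mul_le_mul_of_nonneg_left hint (Nat.cast_nonneg d)
      refine h2.trans (le_of_eq ?_)
      field_simp
    · have h1 : Tendsto (fun d : ℕ => ((N d:ℝ) - d)/(d:ℝ)^2) atTop atTop := by
        refine (tendsto_atTop_add_right_of_le' atTop (-1 : ℝ) hgrowth
          (g := fun d : ℕ => -((d:ℝ)⁻¹)) ?_).congr' ?_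
        · filter_upwards [eventually_ge_atTop 1] with d hd
          have h1 : (1:ℝ) ≤ (d:ℝ) := by exact_mod_cast hd
          have : (d:ℝ)⁻¹ ≤ 1 := by
            rw [inv_le_one_iff₀]; right; exact h1
          linarith
        filter_upwards [eventually_ge_atTop 1] with d hd
        have hd0 : (d:ℝ) ≠ 0 := by positivity
        field_simp
        ring
      have h3 : Tendsto (fun d : ℕ => C * (((N d:ℝ) - d)/(d:ℝ)^2)⁻¹) atTop (nhds 0) := by
        simpa using tendsto_const_nhds.mul h1.inv_tendsto_atTop
      refine h3.congr' ?_
      filter_upwards [eventually_ge_atTop 1] with d hd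
      have hd0 : (d:ℝ) ≠ 0 := by positivity
      have hap := hapos d
      rw [inv_div]
      ring
  have := (Real.continuous_exp.tendsto 0).comp hbound
  rw [Real.exp_zero] at this
  refine this.congr fun d => (hkey d).symm
end

section
/- Let F(x) = x^{-k} L(x) for x large, where k > 0 and L is slowly varying, and define K(x) = ∫ₓ^∞ (1 - x²/y²)^{(d-2)/2} |dF(y)| for d ≥ 3. Then K(x) ~ F(x) · ((d-2)/2) · B((k+2)/2, d/2 − 1) as x → ∞. -/
open Filter Topology MeasureTheory

/-- `L` is slowly varying at infinity. -/
def SlowlyVarying (L : ℝ → ℝ) : Prop :=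
  ∀ lam : ℝ, 0 < lam → Tendsto (fun x => L (lam * x) / L x) atTop (nhds 1)

open Set

/-!
The level sets `{y > x | (1 - x²/y²) ^ p > t}`, `0 < t < 1`, are the rays `(s(t) x, ∞)` with
`s = kernelInverse p`, so by the layer-cake formula `K(x) = ∫₀¹ F(s(t) x) dt`. Regular variation
gives `F(s x) / F(x) → s ^ (-k)`, dominated by `1` because `F` is antitone and `s ≥ 1`; the
substitution `t = u ^ p` turns `∫₀¹ s(t) ^ (-k) dt = ∫₀¹ (1 - t ^ (1/p)) ^ (k/2) dt` into
`p B(p, k/2 + 1)`. Since `F(2x) / F(x) → 2 ^ (-k) < 1`, the antitone `F` is nonnegative and tends to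
`0`, which identifies the `-dF`-measure of `(y, ∞)` with `F y`.
-/

def RegularlyVarying (F : ℝ → ℝ) (ρ : ℝ) : Prop :=
  ∀ lam : ℝ, 0 < lam → Tendsto (fun x => F (lam * x) / F x) atTop (𝓝 (lam ^ ρ))

namespace SlowlyVarying

variable {L : ℝ → ℝ}

theorem eventually_ne_zero (hL : SlowlyVarying L) : ∀ᶠ x in atTop, L x ≠ 0 := by
  filter_upwards [(hL 2 two_pos).eventually_ne one_ne_zero] with x hx h0
  simp [h0] at hx

theorem regularlyVarying_rpow_mul (hL : SlowlyVarying L) {F : ℝ → ℝ} {ρ : ℝ}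
    (hF : ∀ᶠ x in atTop, F x = x ^ ρ * L x) : RegularlyVarying F ρ := by
  intro lam hlam
  have hF_lam : ∀ᶠ x in atTop, F (lam * x) = (lam * x) ^ ρ * L (lam * x) :=
    (tendsto_id.const_mul_atTop hlam).eventually hF
  have hlim := (hL lam hlam).const_mul (lam ^ ρ)
  rw [mul_one] at hlim
  refine hlim.congr' ?_
  filter_upwards [hF, hF_lam, eventually_gt_atTop 0, hL.eventually_ne_zero] with x hFx hFlx hx hLx
  have hxρ : x ^ ρ ≠ 0 := (Real.rpow_pos_of_pos hx _).ne'
  rw [hFx, hFlx, Real.mul_rpow hlam.le hx.le]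
  field_simp

end SlowlyVarying

namespace Antitone

variable {F : ℝ → ℝ}

theorem nonneg_of_tendsto_div_lt_one (hF : Antitone F) {lam c : ℝ} (hlam : 1 ≤ lam)
    (hc : c < 1) (hlim : Tendsto (fun x => F (lam * x) / F x) atTop (𝓝 c)) (x : ℝ) :
    0 ≤ F x := by
  by_contra! hx
  obtain ⟨y, hy, hxy, hy0⟩ := ((hlim.eventually (gt_mem_nhds hc)).and
    ((eventually_ge_atTop x).and (eventually_ge_atTop 0))).exists
  have hFy : F y < 0 := (hF hxy).trans_lt hx
  have hF_lam : F (lam * y) ≤ F y := hF (le_mul_of_one_le_left hy0 hlam)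
  rw [div_lt_one_of_neg hFy] at hy
  linarith

theorem tendsto_zero_of_tendsto_div (hF : Antitone F) (hF0 : ∀ x, 0 ≤ F x) {lam c : ℝ}
    (hlam : 0 < lam) (hc : c ≠ 1) (hlim : Tendsto (fun x => F (lam * x) / F x) atTop (𝓝 c)) :
    Tendsto F atTop (𝓝 0) := by
  have hinf := tendsto_atTop_ciInf hF ⟨0, forall_mem_range.2 hF0⟩
  obtain hl | hl := (le_ciInf hF0).eq_or_lt
  · rwa [← hl] at hinf
  · have hratio := (hinf.comp (tendsto_id.const_mul_atTop hlam)).div hinf hl.ne'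
    rw [div_self hl.ne'] at hratio
    exact absurd (tendsto_nhds_unique hlim hratio) hc

theorem tendsto_integral_comp_mul_div {α : Type*} [MeasurableSpace α] {μ : Measure α}
    [IsFiniteMeasure μ] (hF : Antitone F) (hF0 : ∀ x, 0 ≤ F x) {s : α → ℝ} {g : ℝ → ℝ}
    (hs : Measurable s) (hs1 : ∀ᵐ t ∂μ, 1 ≤ s t)
    (hlim : ∀ lam, 1 ≤ lam → Tendsto (fun x => F (lam * x) / F x) atTop (𝓝 (g lam))) :
    Tendsto (fun x => (∫ t, F (s t * x) ∂μ) / F x) atTop (𝓝 (∫ t, g (s t) ∂μ)) := by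
  simp_rw [← integral_div]
  refine tendsto_integral_filter_of_dominated_convergence (fun _ => 1)
    (Eventually.of_forall fun x =>
      ((hF.measurable.comp (hs.mul_const x)).div_const _).aestronglyMeasurable)
    ?_ (integrable_const 1) (hs1.mono fun t ht => hlim (s t) ht)
  filter_upwards [eventually_ge_atTop 0] with x hx
  filter_upwards [hs1] with t ht
  rw [Real.norm_of_nonneg (div_nonneg (hF0 _) (hF0 _))]
  exact div_le_one_of_le₀ (hF (le_mul_of_one_le_left hx ht)) (hF0 x)

end Antitone

theorem lintegral_Ioi_eq_lintegral_measure_Ioi {μ : Measure ℝ} {a : ℝ} {g ψ : ℝ → ℝ}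
    (hg : Measurable g) (hg_mem : ∀ y ∈ Ioi a, g y ∈ Ico 0 1)
    (hlevel : ∀ t ∈ Ioo 0 1, {y | t < g y} ∩ Ioi a = Ioi (ψ t)) :
    ∫⁻ y in Ioi a, ENNReal.ofReal (g y) ∂μ = ∫⁻ t in Ioo 0 1, μ (Ioi (ψ t)) := by
  have hlevel' : ∀ t ∈ Ioi (0 : ℝ),
      μ.restrict (Ioi a) {y | t < g y} = (Ioo 0 1).indicator (fun t => μ (Ioi (ψ t))) t := by
    intro t ht
    rw [Measure.restrict_apply (measurableSet_lt measurable_const hg)]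
    by_cases ht1 : t < 1
    · have ht' : t ∈ Ioo 0 1 := ⟨ht, ht1⟩
      rw [indicator_of_mem ht', hlevel t ht']
    · have hempty : {y | t < g y} ∩ Ioi a = ∅ :=
        eq_empty_of_forall_notMem fun y ⟨hty, hy⟩ => ht1 (hty.trans (hg_mem y hy).2)
      rw [indicator_of_notMem fun h => ht1 h.2, hempty, measure_empty]
  rw [lintegral_eq_lintegral_meas_lt _
      (ae_restrict_of_forall_mem measurableSet_Ioi fun y hy => (hg_mem y hy).1) hg.aemeasurable,
    setLIntegral_congr_fun measurableSet_Ioi hlevel', lintegral_indicator measurableSet_Ioo,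
    Measure.restrict_restrict measurableSet_Ioo, inter_eq_left.2 Ioo_subset_Ioi_self]

/-- `kernelInverse p` inverts `u ↦ (1 - u⁻²) ^ p`, which maps `(1, ∞)` onto `(0, 1)`. -/
noncomputable def kernelInverse (p t : ℝ) : ℝ := (1 - t ^ p⁻¹) ^ (-(1 / 2 : ℝ))

section kernelInverse

variable {p t : ℝ}

theorem one_sub_rpow_inv_pos (hp : 0 < p) (ht : t ∈ Ioo 0 1) : 0 < 1 - t ^ p⁻¹ :=
  sub_pos.2 (Real.rpow_lt_one ht.1.le ht.2 (inv_pos.2 hp))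

theorem one_le_kernelInverse (hp : 0 < p) (ht : t ∈ Ioo 0 1) : 1 ≤ kernelInverse p t :=
  Real.one_le_rpow_of_pos_of_le_one_of_nonpos (one_sub_rpow_inv_pos hp ht)
    (sub_le_self _ (Real.rpow_nonneg ht.1.le _)) (by norm_num)

theorem measurable_kernelInverse : Measurable (kernelInverse p) := by
  unfold kernelInverse
  fun_prop

theorem kernelInverse_rpow_neg (hp : 0 < p) (ht : t ∈ Ioo 0 1) (k : ℝ) :
    kernelInverse p t ^ (-k) = (1 - t ^ p⁻¹) ^ (k / 2) := by
  rw [kernelInverse, ← Real.rpow_mul (one_sub_rpow_inv_pos hp ht).le]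
  ring_nf

theorem kernelInverse_sq (hp : 0 < p) (ht : t ∈ Ioo 0 1) :
    kernelInverse p t ^ 2 = (1 - t ^ p⁻¹)⁻¹ := by
  rw [← Real.rpow_natCast, kernelInverse, ← Real.rpow_mul (one_sub_rpow_inv_pos hp ht).le]
  norm_num [Real.rpow_neg_one]

end kernelInverse

theorem one_sub_sq_div_sq_mem_Ioo {x y : ℝ} (hx : 0 < x) (hxy : x < y) :
    1 - x ^ 2 / y ^ 2 ∈ Ioo 0 1 := by
  have hy : 0 < y := hx.trans hxy
  have hlt : x ^ 2 / y ^ 2 < 1 :=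
    (div_lt_one (by positivity)).2 (pow_lt_pow_left₀ hxy hx.le two_ne_zero)
  have hpos : 0 < x ^ 2 / y ^ 2 := by positivity
  constructor <;> linarith

theorem setOf_lt_rpow_inter_Ioi_eq_Ioi_kernelInverse {p t x : ℝ} (hp : 0 < p)
    (ht : t ∈ Ioo 0 1) (hx : 0 < x) :
    {y | t < (1 - x ^ 2 / y ^ 2) ^ p} ∩ Ioi x = Ioi (kernelInverse p t * x) := by
  have hx_le : x ≤ kernelInverse p t * x :=
    le_mul_of_one_le_left hx.le (one_le_kernelInverse hp ht)
  have hlt_iff : ∀ y, x < y → (kernelInverse p t * x < y ↔ t < (1 - x ^ 2 / y ^ 2) ^ p) := by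
    intro y hxy
    have hy : 0 < y := hx.trans hxy
    rw [← pow_lt_pow_iff_left₀ (hx.le.trans hx_le) hy.le two_ne_zero, mul_pow,
      kernelInverse_sq hp ht, inv_mul_lt_iff₀ (one_sub_rpow_inv_pos hp ht),
      ← div_lt_iff₀ (by positivity), lt_sub_comm,
      Real.rpow_inv_lt_iff_of_pos ht.1.le (one_sub_sq_div_sq_mem_Ioo hx hxy).1.le hp]
  ext y
  constructor
  · rintro ⟨hty, hxy : x < y⟩
    exact (hlt_iff y hxy).2 hty
  · intro (hy : _ < y)
    have hxy : x < y := hx_le.trans_lt hy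
    exact ⟨(hlt_iff y hxy).1 hy, hxy⟩

theorem setIntegral_Ioi_one_sub_sq_div_sq_rpow {μ : Measure ℝ} {F : ℝ → ℝ}
    (hμ : ∀ y, μ (Ioi y) = ENNReal.ofReal (F y)) (hF : Measurable F) (hF0 : ∀ y, 0 ≤ F y)
    {p x : ℝ} (hp : 0 < p) (hx : 0 < x) :
    ∫ y in Ioi x, (1 - x ^ 2 / y ^ 2) ^ p ∂μ = ∫ t in Ioo 0 1, F (kernelInverse p t * x) := by
  have hmem : ∀ y ∈ Ioi x, (1 - x ^ 2 / y ^ 2) ^ p ∈ Ico 0 1 := fun y hxy =>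
    have hb := one_sub_sq_div_sq_mem_Ioo hx hxy
    ⟨Real.rpow_nonneg hb.1.le p, Real.rpow_lt_one hb.1.le hb.2 hp⟩
  have hmeas : Measurable fun y : ℝ => (1 - x ^ 2 / y ^ 2) ^ p := by fun_prop
  rw [integral_eq_lintegral_of_nonneg_ae
      (ae_restrict_of_forall_mem measurableSet_Ioi fun y hy => (hmem y hy).1)
      hmeas.aestronglyMeasurable,
    integral_eq_lintegral_of_nonneg_ae (ae_of_all _ fun t => hF0 _)
      (hF.comp (measurable_kernelInverse.mul_const x)).aestronglyMeasurable,
    lintegral_Ioi_eq_lintegral_measure_Ioi hmeas hmem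
      fun t ht => setOf_lt_rpow_inter_Ioi_eq_Ioi_kernelInverse hp ht hx]
  exact congrArg _ (setLIntegral_congr_fun measurableSet_Ioo fun t _ => hμ _)

theorem betaFn_comm_s11 (u v : ℝ) : betaFn u v = betaFn v u := by
  rw [betaFn, betaFn, mul_comm (Real.Gamma u), add_comm]

theorem intervalIntegral_rpow_mul_one_sub_rpow_eq_betaFn {u v : ℝ} (hu : 0 < u) (hv : 0 < v) :
    ∫ x in (0 : ℝ)..1, x ^ (u - 1) * (1 - x) ^ (v - 1) = betaFn u v := by
  have hofReal : Complex.betaIntegral u v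
      = ((∫ x in (0 : ℝ)..1, x ^ (u - 1) * (1 - x) ^ (v - 1) : ℝ) : ℂ) := by
    rw [Complex.betaIntegral, ← intervalIntegral.integral_ofReal]
    refine intervalIntegral.integral_congr fun x hx => ?_
    rw [uIcc_of_le zero_le_one] at hx
    rw [Complex.ofReal_mul, Complex.ofReal_cpow hx.1, Complex.ofReal_cpow (sub_nonneg.2 hx.2)]
    push_cast
    ring
  rw [show betaFn u v = ProbabilityTheory.beta u v from rfl,
    ProbabilityTheory.beta_eq_betaIntegralReal u v hu hv, hofReal, Complex.ofReal_re]

theorem intervalIntegral_one_sub_rpow_inv_rpow {p q : ℝ} (hp : 0 < p) (hq : -1 < q) :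
    ∫ t in (0 : ℝ)..1, (1 - t ^ p⁻¹) ^ q = p * betaFn p (q + 1) := by
  have hpos : ∀ u ∈ Ioo (min (0 : ℝ) 1) (max 0 1), 0 < u := fun u hu => by simpa using hu.1
  have hsubst := intervalIntegral.integral_comp_mul_deriv_of_deriv_nonneg
    (f := fun u => u ^ p) (f' := fun u => p * u ^ (p - 1)) (g := fun t => (1 - t ^ p⁻¹) ^ q)
    (a := 0) (b := 1) (Real.continuous_rpow_const hp.le).continuousOn
    (fun u hu => Real.hasDerivAt_rpow_const (Or.inl (hpos u hu).ne'))
    (fun u hu => by have := hpos u hu; positivity)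
  simp only [Real.zero_rpow hp.ne', Real.one_rpow] at hsubst
  rw [← hsubst, ← intervalIntegral_rpow_mul_one_sub_rpow_eq_betaFn hp (by linarith),
    ← intervalIntegral.integral_const_mul]
  refine intervalIntegral.integral_congr fun u hu => ?_
  rw [uIcc_of_le zero_le_one] at hu
  simp only [Function.comp, Real.rpow_rpow_inv hu.1 hp.ne', add_sub_cancel_right]
  ring

theorem setIntegral_kernelInverse_rpow_neg {p k : ℝ} (hp : 0 < p) (hk : -2 < k) :
    ∫ t in Ioo 0 1, kernelInverse p t ^ (-k) = p * betaFn p ((k + 2) / 2) := by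
  rw [setIntegral_congr_fun measurableSet_Ioo fun t ht => kernelInverse_rpow_neg hp ht k,
    ← integral_Ioc_eq_integral_Ioo, ← intervalIntegral.integral_of_le zero_le_one,
    intervalIntegral_one_sub_rpow_inv_rpow hp (by linarith)]
  ring_nf

theorem stmt_11 (d : ℕ) (hd : 3 ≤ d) (k : ℝ) (hk : 0 < k) (F L : ℝ → ℝ)
    (hL : SlowlyVarying L) (hF : ∀ᶠ x in atTop, F x = x ^ (-k) * L x)
    (S : StieltjesFunction ℝ) (hS : ∀ x, S x = -F x) :
    Tendsto (fun x : ℝ =>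
        (∫ y in Set.Ioi x, (1 - x ^ 2 / y ^ 2) ^ (((d : ℝ) - 2) / 2) ∂S.measure)
          / (F x * (((d : ℝ) - 2) / 2) * betaFn ((k + 2) / 2) ((d : ℝ) / 2 - 1)))
      atTop (nhds 1) := by
  have hd' : (3 : ℝ) ≤ d := by exact_mod_cast hd
  set p : ℝ := ((d : ℝ) - 2) / 2 with hp_def
  have hp : 0 < p := by rw [hp_def]; linarith
  have hRV : RegularlyVarying F (-k) := hL.regularlyVarying_rpow_mul hF
  have hanti : Antitone F := fun a b hab => by simpa [hS] using S.mono hab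
  have h2k : (2 : ℝ) ^ (-k) < 1 := Real.rpow_lt_one_of_one_lt_of_neg one_lt_two (by linarith)
  have hF0 : ∀ x, 0 ≤ F x := hanti.nonneg_of_tendsto_div_lt_one one_le_two h2k (hRV 2 two_pos)
  have hFlim : Tendsto F atTop (𝓝 0) :=
    hanti.tendsto_zero_of_tendsto_div hF0 two_pos h2k.ne (hRV 2 two_pos)
  have hμ : ∀ y, S.measure (Ioi y) = ENNReal.ofReal (F y) := fun y => by
    rw [S.measure_Ioi (l := 0) (by simpa [funext hS] using hFlim.neg), hS, zero_sub, neg_neg]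
  have hlim := hanti.tendsto_integral_comp_mul_div (μ := volume.restrict (Ioo 0 1)) hF0
    measurable_kernelInverse (ae_restrict_of_forall_mem measurableSet_Ioo fun t ht =>
      one_le_kernelInverse hp ht) fun lam hlam => hRV lam (by linarith)
  have hB : p * betaFn p ((k + 2) / 2) ≠ 0 :=
    mul_ne_zero hp.ne' (ProbabilityTheory.beta_pos hp (by linarith)).ne'
  rw [setIntegral_kernelInverse_rpow_neg hp (by linarith)] at hlim
  have hlim' := hlim.div_const (p * betaFn p ((k + 2) / 2))
  rw [div_self hB] at hlim'
  refine hlim'.congr' ?_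
  filter_upwards [eventually_gt_atTop 0] with x hx
  rw [setIntegral_Ioi_one_sub_sq_div_sq_rpow hμ hanti.measurable hF0 hp hx,
    show (d : ℝ) / 2 - 1 = p by rw [hp_def]; ring, betaFn_comm_s11, div_div, mul_assoc]
end
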